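/- Let S̄ be the quotient of ℤ/k × S by the equivalence relation generated by (i,s) ∼ (i+1, φ(s)) for s ∈ S'. Suppose x = ψ_i(s) = ψ_j(s') and y = ψ_i(t) = ψ_j(t') for i,j ∈ ℤ/k and s,s',t,t' ∈ S, where ψ_i(s) denotes the class of (i,s). If k is a multiple of the length of every cycle of Λ and greater than twice the length of every path of Λ, then there exists n ≥ 0 such that either s' = φⁿ(s) and t' = φⁿ(t) with j = i + n, or s = φⁿ(s') and t = φⁿ(t') with i = j + n (where φⁿ denotes n-fold application of φ, defined on the relevant elements). -/
import Mathlib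


/-- `phiIter S' φ n s s'` means s' is obtained from s by n-fold application of the partial
map φ (defined on S'), all intermediate points lying in the domain S'. -/
def phiIter {S : Type*} (S' : Set S) (φ : S → S) : ℕ → S → S → Prop
  | 0, a, b => a = b
  | n + 1, a, b => a ∈ S' ∧ phiIter S' φ n (φ a) b

section Aux

variable {S : Type*} {S' : Set S} {φ : S → S}

theorem phiIter_iff (n : ℕ) : ∀ a b : S,
    phiIter S' φ n a b ↔ ((∀ l, l < n → φ^[l] a ∈ S') ∧ φ^[n] a = b) := by
  induction n with
  | zero => intro a b; simp [phiIter]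
  | succ n ih =>
    intro a b
    show (a ∈ S' ∧ phiIter S' φ n (φ a) b) ↔ _
    rw [ih]
    constructor
    · rintro ⟨ha, hmem, heq⟩
      refine ⟨?_, ?_⟩
      · intro l hl
        cases l with
        | zero => simpa using ha
        | succ l => rw [Function.iterate_succ_apply]; exact hmem l (by omega)
      · rw [Function.iterate_succ_apply]; exact heq
    · rintro ⟨hmem, heq⟩
      refine ⟨by simpa using hmem 0 (by omega), ?_, ?_⟩
      · intro l hl
        rw [← Function.iterate_succ_apply]
        exact hmem (l + 1) (by omega)
      · rw [← Function.iterate_succ_apply]; exact heq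

theorem phiIter_eq {n : ℕ} {a b : S} (h : phiIter S' φ n a b) : φ^[n] a = b :=
  ((phiIter_iff n a b).1 h).2

theorem phiIter_append {m n : ℕ} {a b c : S} (h1 : phiIter S' φ m a b)
    (h2 : phiIter S' φ n b c) : phiIter S' φ (m + n) a c := by
  rw [phiIter_iff] at h1 h2 ⊢
  obtain ⟨h1m, h1e⟩ := h1
  obtain ⟨h2m, h2e⟩ := h2
  refine ⟨?_, ?_⟩
  · intro l hl
    rcases lt_or_ge l m with h | h
    · exact h1m l h
    · have : φ^[l] a = φ^[l - m] (φ^[m] a) := by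
        rw [← Function.iterate_add_apply]; congr 1; omega
      rw [this, h1e]; exact h2m _ (by omega)
  · rw [show m + n = n + m by omega, Function.iterate_add_apply, h1e]; exact h2e

theorem phiIter_split {m M : ℕ} {a c : S} (hm : m ≤ M) (h : phiIter S' φ M a c) :
    phiIter S' φ m a (φ^[m] a) ∧ phiIter S' φ (M - m) (φ^[m] a) c := by
  rw [phiIter_iff] at h
  obtain ⟨hmem, heq⟩ := h
  constructor
  · exact (phiIter_iff _ _ _).2 ⟨fun l hl => hmem l (by omega), rfl⟩
  · refine (phiIter_iff _ _ _).2 ⟨?_, ?_⟩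
    · intro l hl
      rw [← Function.iterate_add_apply]
      exact hmem (l + m) (by omega)
    · rw [← Function.iterate_add_apply, show M - m + m = M by omega]; exact heq

theorem iterate_cancel (hinj : Set.InjOn φ S') :
    ∀ (p : ℕ) (a b : S), (∀ l, l < p → φ^[l] a ∈ S') → (∀ l, l < p → φ^[l] b ∈ S') →
      φ^[p] a = φ^[p] b → a = b := by
  intro p
  induction p with
  | zero => simp
  | succ p ih =>
    intro a b ha hb h
    rw [Function.iterate_succ_apply', Function.iterate_succ_apply'] at h
    exact ih a b (fun l hl => ha l (by omega)) (fun l hl => hb l (by omega))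
      (hinj (ha p (by omega)) (hb p (by omega)) h)

theorem phiIter_cancel (hinj : Set.InjOn φ S') {n : ℕ} {a b c : S}
    (h1 : phiIter S' φ n a c) (h2 : phiIter S' φ n b c) : a = b := by
  rw [phiIter_iff] at h1 h2
  exact iterate_cancel hinj n a b h1.1 h2.1 (h1.2.trans h2.2.symm)

theorem iterate_self_cancel (hinj : Set.InjOn φ S') {p e : ℕ} {a : S}
    (hmem : ∀ l, l < p + e → φ^[l] a ∈ S') (h : φ^[p + e] a = φ^[p] a) : φ^[e] a = a := by
  refine iterate_cancel hinj p (φ^[e] a) a ?_ (fun l hl => hmem l (by omega)) ?_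
  · intro l hl
    rw [← Function.iterate_add_apply]
    exact hmem (l + e) (by omega)
  · rw [← Function.iterate_add_apply]
    exact h

def OnCycle (S' : Set S) (φ : S → S) (s : S) : Prop := ∃ d, 0 < d ∧ phiIter S' φ d s s

theorem onCycle_mem_all {s : S} (hs : OnCycle S' φ s) : ∀ l, φ^[l] s ∈ S' := by
  obtain ⟨d, hd, hiter⟩ := hs
  rw [phiIter_iff] at hiter
  obtain ⟨hmem, heq⟩ := hiter
  intro l
  induction l using Nat.strong_induction_on with
  | _ l ih =>
    rcases lt_or_ge l d with h | h
    · exact hmem l h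
    · have h1 : φ^[l] s = φ^[l - d] (φ^[d] s) := by
        rw [← Function.iterate_add_apply]; congr 1; omega
      rw [h1, heq]; exact ih _ (by omega)

theorem onCycle_phiIter {s : S} (hs : OnCycle S' φ s) (m : ℕ) :
    phiIter S' φ m s (φ^[m] s) :=
  (phiIter_iff _ _ _).2 ⟨fun l _ => onCycle_mem_all hs l, rfl⟩

theorem onCycle_push {s : S} (hs : OnCycle S' φ s) (m : ℕ) : OnCycle S' φ (φ^[m] s) := by
  obtain ⟨d, hd, hiter⟩ := hs
  have heq : φ^[d] s = s := phiIter_eq hiter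
  refine ⟨d, hd, (phiIter_iff _ _ _).2 ⟨?_, ?_⟩⟩
  · intro l hl
    rw [← Function.iterate_add_apply]
    exact onCycle_mem_all ⟨d, hd, hiter⟩ _
  · rw [← Function.iterate_add_apply, show d + m = m + d by omega,
      Function.iterate_add_apply, heq]

theorem iterate_fixed_dvd {f : S → S} {a : S} {d m : ℕ} (h : f^[d] a = a) (hdvd : d ∣ m) :
    f^[m] a = a := by
  obtain ⟨c, rfl⟩ := hdvd
  rw [Function.iterate_mul]
  exact Function.iterate_fixed h c

theorem onCycle_pull (hinj : Set.InjOn φ S') {a b : S} {n : ℕ}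
    (hb : OnCycle S' φ b) (h : phiIter S' φ n a b) : OnCycle S' φ a := by
  obtain ⟨d, hd, hib⟩ := hb
  have heqb : φ^[d] b = b := phiIter_eq hib
  rw [phiIter_iff] at h
  obtain ⟨hma, hea⟩ := h
  set e := d * (n + 1) with he_def
  have he : 0 < e := by positivity
  have hen : n < e := by
    calc n < n + 1 := by omega
    _ ≤ d * (n + 1) := Nat.le_mul_of_pos_left _ hd
  have hfixb : φ^[e] b = b := iterate_fixed_dvd heqb ⟨n + 1, rfl⟩
  have hmem : ∀ l, l < n + e → φ^[l] a ∈ S' := by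
    intro l hl
    rcases lt_or_ge l n with h | h
    · exact hma l h
    · have h1 : φ^[l] a = φ^[l - n] (φ^[n] a) := by
        rw [← Function.iterate_add_apply]; congr 1; omega
      rw [h1, hea]
      exact onCycle_mem_all ⟨d, hd, hib⟩ _
  have hkey : φ^[n + e] a = φ^[n] a := by
    rw [show n + e = e + n by omega, Function.iterate_add_apply, hea, hfixb]
  have hfix : φ^[e] a = a := iterate_self_cancel hinj hmem hkey
  exact ⟨e, he, (phiIter_iff _ _ _).2 ⟨fun l hl => hmem l (by omega), hfix⟩⟩

theorem onCycle_dvd {k : ℕ} {E : S → S → Prop}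
    (hE : ∀ a b, E a b ↔ a ∈ S' ∧ φ a = b)
    (hcyc : ∀ (n : ℕ) (f : ZMod (n + 1) → S), Function.Injective f →
      (∀ i, E (f i) (f (i + 1))) → (n + 1) ∣ k)
    {s : S} (hs : OnCycle S' φ s) : φ^[k] s = s := by
  classical
  have hex : ∃ d, 0 < d ∧ phiIter S' φ d s s := hs
  set d₀ := Nat.find hex with hd₀def
  obtain ⟨hpos, hiter⟩ := Nat.find_spec hex
  have hmin : ∀ m, m < d₀ → ¬(0 < m ∧ phiIter S' φ m s s) := fun m hm => Nat.find_min hex hm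
  have heq : φ^[d₀] s = s := phiIter_eq hiter
  have hmem : ∀ l, φ^[l] s ∈ S' := onCycle_mem_all hs
  have hmod : ∀ a : ℕ, φ^[a % d₀] s = φ^[a] s := by
    intro a
    have h2 : φ^[d₀ * (a / d₀)] s = s := iterate_fixed_dvd heq ⟨_, rfl⟩
    calc φ^[a % d₀] s = φ^[a % d₀] (φ^[d₀ * (a / d₀)] s) := by rw [h2]
      _ = φ^[a % d₀ + d₀ * (a / d₀)] s := (Function.iterate_add_apply _ _ _ _).symm
      _ = φ^[a] s := by rw [Nat.mod_add_div]
  have hkey : ∀ p q : ℕ, p < q → q < d₀ → φ^[p] s = φ^[q] s → False := by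
    intro p q hpq hq h
    have he : φ^[d₀ - q + p] s = s := by
      rw [Function.iterate_add_apply, h, ← Function.iterate_add_apply,
        show d₀ - q + q = d₀ by omega, heq]
    exact hmin (d₀ - q + p) (by omega)
      ⟨by omega, (phiIter_iff _ _ _).2 ⟨fun l _ => hmem l, he⟩⟩
  obtain ⟨n, hn⟩ : ∃ n, d₀ = n + 1 := ⟨d₀ - 1, by omega⟩
  have hdvd : d₀ ∣ k := by
    rw [hn]
    refine hcyc n (fun i => φ^[i.val] s) ?_ ?_
    · intro i₁ i₂ h
      by_contra hne
      have hv : i₁.val ≠ i₂.val := fun h' => hne (ZMod.val_injective _ h')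
      have hlt₁ : i₁.val < d₀ := by have := i₁.val_lt; omega
      have hlt₂ : i₂.val < d₀ := by have := i₂.val_lt; omega
      rcases hv.lt_or_gt with hlt | hlt
      · exact hkey _ _ hlt hlt₂ h
      · exact hkey _ _ hlt hlt₁ h.symm
    · intro i
      rw [hE]
      refine ⟨hmem _, ?_⟩
      have h1 : φ (φ^[i.val] s) = φ^[i.val + 1] s := (Function.iterate_succ_apply' _ _ _).symm
      have h2 : (i + 1).val = (i.val + 1) % (n + 1) := by
        rw [ZMod.val_add, ZMod.val_one_eq_one_mod, Nat.add_mod, Nat.mod_mod_of_dvd,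
          ← Nat.add_mod] <;> rfl
      have hmod' : ∀ a : ℕ, φ^[a % (n + 1)] s = φ^[a] s := by rw [← hn]; exact hmod
      show φ (φ^[i.val] s) = φ^[(i + 1).val] s
      rw [h1, h2, hmod']
  exact iterate_fixed_dvd heq hdvd

theorem not_onCycle_bound [Fintype S] (hinj : Set.InjOn φ S') {k : ℕ} {E : S → S → Prop}
    (hE : ∀ a b, E a b ↔ a ∈ S' ∧ φ a = b)
    (hpath : ∀ (n : ℕ) (f : Fin (n + 1) → S), Function.Injective f →
      (∀ i : Fin n, E (f i.castSucc) (f i.succ)) →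
      (∀ x, ¬ E x (f 0)) → (∀ x, ¬ E (f (Fin.last n)) x) → 2 * n < k)
    {s : S} (hs : ¬ OnCycle S' φ s) {n : ℕ} {u : S}
    (h : phiIter S' φ n s u ∨ phiIter S' φ n u s) : 2 * n < k := by
  classical
  set N := Fintype.card S with hN
  have pigeon : ∀ a : S, (∀ l, l ≤ N → φ^[l] a ∈ S') → OnCycle S' φ a := by
    intro a ha
    have hni : ¬ Function.Injective (fun m : Fin (N + 1) => φ^[m.val] a) := by
      intro hinj'
      have := Fintype.card_le_of_injective _ hinj'
      simp [hN] at this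
    rw [Function.not_injective_iff] at hni
    obtain ⟨m₁, m₂, hmeq, hmne⟩ := hni
    have key : ∀ p q : ℕ, p < q → q ≤ N → φ^[p] a = φ^[q] a → OnCycle S' φ a := by
      intro p q hpq hq hpqa
      have hfix : φ^[q - p] a = a := by
        refine iterate_self_cancel hinj (p := p) (fun l hl => ha l (by omega)) ?_
        rw [show p + (q - p) = q by omega]
        exact hpqa.symm
      exact ⟨q - p, by omega, (phiIter_iff _ _ _).2 ⟨fun l hl => ha l (by omega), hfix⟩⟩
    have hv : m₁.val ≠ m₂.val := fun h' => hmne (Fin.val_injective h')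
    rcases hv.lt_or_gt with hlt | hlt
    · exact key _ _ hlt (by omega) hmeq
    · exact key _ _ hlt (by omega) hmeq.symm
  -- forward bound F
  have hFex : ∃ F, φ^[F] s ∉ S' := by
    by_contra hcon
    push_neg at hcon
    exact hs (pigeon s fun l _ => hcon l)
  set F := Nat.find hFex with hFdef
  have hF : φ^[F] s ∉ S' := Nat.find_spec hFex
  have hFmin : ∀ l, l < F → φ^[l] s ∈ S' := by
    intro l hl
    by_contra hcon
    exact absurd hcon (by simpa using Nat.find_min hFex hl)
  -- backward bound
  have hBbd : ∀ m v, phiIter S' φ m v s → m ≤ N := by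
    intro m v hm
    by_contra hcon
    push_neg at hcon
    rw [phiIter_iff] at hm
    obtain ⟨hmem, heq⟩ := hm
    have hv : OnCycle S' φ v := pigeon v fun l hl => hmem l (by omega)
    exact hs (heq ▸ onCycle_push hv m)
  set P : ℕ → Prop := fun m => ∃ v, phiIter S' φ m v s with hPdef
  have hP0 : P 0 := ⟨s, rfl⟩
  set B := Nat.findGreatest P N with hBdef
  have hPB : P B := Nat.findGreatest_spec (Nat.zero_le N) hP0
  obtain ⟨a₀, ha₀⟩ := hPB
  have hBmax : ∀ m, B < m → ¬ P m := by
    intro m hm hPm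
    obtain ⟨v, hv⟩ := hPm
    exact Nat.findGreatest_is_greatest hm (hBbd m v hv) ⟨v, hv⟩
  have heqB : φ^[B] a₀ = s := phiIter_eq ha₀
  have hmemB : ∀ l, l < B → φ^[l] a₀ ∈ S' := ((phiIter_iff _ _ _).1 ha₀).1
  have hmemtot : ∀ l, l < B + F → φ^[l] a₀ ∈ S' := by
    intro l hl
    rcases lt_or_ge l B with hlb | hlb
    · exact hmemB l hlb
    · have h1 : φ^[l] a₀ = φ^[l - B] (φ^[B] a₀) := by
        rw [← Function.iterate_add_apply]; congr 1; omega
      rw [h1, heqB]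
      exact hFmin _ (by omega)
  have hend : φ^[B + F] a₀ = φ^[F] s := by
    rw [show B + F = F + B by omega, Function.iterate_add_apply, heqB]
  have hgInj : Function.Injective (fun m : Fin (B + F + 1) => φ^[m.val] a₀) := by
    have key : ∀ p q : ℕ, p < q → q ≤ B + F → φ^[p] a₀ = φ^[q] a₀ → False := by
      intro p q hpq hq hpqa
      have hfix : φ^[q - p] a₀ = a₀ := by
        refine iterate_self_cancel hinj (p := p) (fun l hl => hmemtot l (by omega)) ?_
        rw [show p + (q - p) = q by omega]
        exact hpqa.symm
      have hc : OnCycle S' φ a₀ :=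
        ⟨q - p, by omega, (phiIter_iff _ _ _).2 ⟨fun l hl => hmemtot l (by omega), hfix⟩⟩
      exact hs (heqB ▸ onCycle_push hc B)
    intro m₁ m₂ hm
    by_contra hne
    have hv : m₁.val ≠ m₂.val := fun h' => hne (Fin.val_injective h')
    rcases hv.lt_or_gt with hlt | hlt
    · exact key _ _ hlt (by omega) hm
    · exact key _ _ hlt (by omega) hm.symm
  have h2BF : 2 * (B + F) < k := by
    refine hpath (B + F) (fun m : Fin (B + F + 1) => φ^[m.val] a₀) hgInj ?_ ?_ ?_
    · intro i₀
      show E (φ^[(i₀.castSucc).val] a₀) (φ^[(i₀.succ).val] a₀)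
      rw [hE, Fin.coe_castSucc, Fin.val_succ]
      exact ⟨hmemtot _ i₀.isLt, (Function.iterate_succ_apply' _ _ _).symm⟩
    · intro x hx
      rw [hE] at hx
      obtain ⟨hx1, hx2⟩ := hx
      have hxa : φ x = a₀ := by simpa using hx2
      have hP1 : P (B + 1) := by
        refine ⟨x, ?_⟩
        have h1 : phiIter S' φ 1 x a₀ := ⟨hx1, hxa⟩
        have := phiIter_append h1 ha₀
        rwa [show 1 + B = B + 1 by omega] at this
      exact hBmax (B + 1) (by omega) hP1
    · intro x hx
      rw [hE] at hx
      refine hF ?_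
      have : (Fin.last (B + F)).val = B + F := rfl
      rw [← hend]
      simpa [this] using hx.1
  rcases h with hfwd | hbwd
  · have hnF : n ≤ F := by
      by_contra hcon
      push_neg at hcon
      exact hF (((phiIter_iff _ _ _).1 hfwd).1 F hcon)
    omega
  · have hnB : n ≤ B := by
      by_contra hcon
      push_neg at hcon
      exact hBmax n hcon ⟨u, hbwd⟩
    omega

theorem eqvGen_rel (hinj : Set.InjOn φ S') {k : ℕ} {r : ZMod k × S → ZMod k × S → Prop}
    (hr : ∀ x y, r x y ↔ x.2 ∈ S' ∧ y = (x.1 + 1, φ x.2))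
    {x y : ZMod k × S} (h : Relation.EqvGen r x y) :
    ∃ n : ℕ, (y.1 = x.1 + (n : ZMod k) ∧ phiIter S' φ n x.2 y.2) ∨
      (x.1 = y.1 + (n : ZMod k) ∧ phiIter S' φ n y.2 x.2) := by
  induction h with
  | rel a b hab =>
    rw [hr] at hab
    obtain ⟨ha, rfl⟩ := hab
    exact ⟨1, Or.inl ⟨by push_cast; rfl, ⟨ha, rfl⟩⟩⟩
  | refl a => exact ⟨0, Or.inl ⟨by push_cast; ring, rfl⟩⟩
  | symm a b _ ih =>
    obtain ⟨n, hn⟩ := ih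
    exact ⟨n, hn.symm⟩
  | trans a b c _ _ ih₁ ih₂ =>
    obtain ⟨m, hm⟩ := ih₁
    obtain ⟨n, hn⟩ := ih₂
    rcases hm with ⟨hm1, hm2⟩ | ⟨hm1, hm2⟩ <;> rcases hn with ⟨hn1, hn2⟩ | ⟨hn1, hn2⟩
    · refine ⟨m + n, Or.inl ⟨?_, phiIter_append hm2 hn2⟩⟩
      rw [hn1, hm1]; push_cast; ring
    · rcases le_total n m with hle | hle
      · obtain ⟨hs1, hs2⟩ := phiIter_split (show m - n ≤ m by omega)
          (show phiIter S' φ m a.2 b.2 from hm2)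
        rw [show m - (m - n) = n by omega] at hs2
        have hcb : c.2 = φ^[m - n] a.2 := phiIter_cancel hinj hn2 hs2
        refine ⟨m - n, Or.inl ⟨?_, hcb ▸ hs1⟩⟩
        have harith : a.1 + ((m - n : ℕ) : ZMod k) + (n : ZMod k) = c.1 + (n : ZMod k) := by
          calc a.1 + ((m - n : ℕ) : ZMod k) + (n : ZMod k)
              = a.1 + (((m - n) + n : ℕ) : ZMod k) := by push_cast; ring
            _ = a.1 + (m : ZMod k) := by rw [show m - n + n = m by omega]
            _ = b.1 := hm1.symm
            _ = c.1 + (n : ZMod k) := hn1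
        exact (add_right_cancel harith).symm
      · obtain ⟨hs1, hs2⟩ := phiIter_split (show n - m ≤ n by omega)
          (show phiIter S' φ n c.2 b.2 from hn2)
        rw [show n - (n - m) = m by omega] at hs2
        have hab2 : a.2 = φ^[n - m] c.2 := phiIter_cancel hinj hm2 hs2
        refine ⟨n - m, Or.inr ⟨?_, hab2 ▸ hs1⟩⟩
        have harith : c.1 + ((n - m : ℕ) : ZMod k) + (m : ZMod k) = a.1 + (m : ZMod k) := by
          calc c.1 + ((n - m : ℕ) : ZMod k) + (m : ZMod k)
              = c.1 + (((n - m) + m : ℕ) : ZMod k) := by push_cast; ring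
            _ = c.1 + (n : ZMod k) := by rw [show n - m + m = n by omega]
            _ = b.1 := hn1.symm
            _ = a.1 + (m : ZMod k) := hm1
        exact (add_right_cancel harith).symm
    · rcases le_total m n with hle | hle
      · obtain ⟨hs1, hs2⟩ := phiIter_split hle (show phiIter S' φ n b.2 c.2 from hn2)
        have hba : φ^[m] b.2 = a.2 := phiIter_eq hm2
        rw [hba] at hs2
        refine ⟨n - m, Or.inl ⟨?_, hs2⟩⟩
        rw [hm1, hn1]
        calc b.1 + (n : ZMod k) = b.1 + (((n - m) + m : ℕ) : ZMod k) := by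
              rw [show n - m + m = n by omega]
          _ = b.1 + (m : ZMod k) + ((n - m : ℕ) : ZMod k) := by push_cast; ring
      · obtain ⟨hs1, hs2⟩ := phiIter_split hle (show phiIter S' φ m b.2 a.2 from hm2)
        have hbc : φ^[n] b.2 = c.2 := phiIter_eq hn2
        rw [hbc] at hs2
        refine ⟨m - n, Or.inr ⟨?_, hs2⟩⟩
        rw [hm1, hn1]
        calc b.1 + (m : ZMod k) = b.1 + (((m - n) + n : ℕ) : ZMod k) := by
              rw [show m - n + n = m by omega]
          _ = b.1 + (n : ZMod k) + ((m - n : ℕ) : ZMod k) := by push_cast; ring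
    · refine ⟨n + m, Or.inr ⟨?_, phiIter_append hn2 hm2⟩⟩
      rw [hm1, hn1]; push_cast; ring

theorem FF [Fintype S] (hinj : Set.InjOn φ S') {k : ℕ} (hk : 0 < k) {E : S → S → Prop}
    (hE : ∀ a b, E a b ↔ a ∈ S' ∧ φ a = b)
    (hcyc : ∀ (n : ℕ) (f : ZMod (n + 1) → S), Function.Injective f →
      (∀ i, E (f i) (f (i + 1))) → (n + 1) ∣ k)
    (hpath : ∀ (n : ℕ) (f : Fin (n + 1) → S), Function.Injective f →
      (∀ i : Fin n, E (f i.castSucc) (f i.succ)) →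
      (∀ x, ¬ E x (f 0)) → (∀ x, ¬ E (f (Fin.last n)) x) → 2 * n < k)
    {i j : ZMod k} {s s' t t' : S} {n₁ n₂ : ℕ} (hle : n₁ ≤ n₂)
    (h1 : j = i + (n₁ : ZMod k)) (h2 : phiIter S' φ n₁ s s')
    (h3 : j = i + (n₂ : ZMod k)) (h4 : phiIter S' φ n₂ t t') :
    ∃ n : ℕ, (j = i + (n : ZMod k) ∧ phiIter S' φ n s s' ∧ phiIter S' φ n t t') ∨
      (i = j + (n : ZMod k) ∧ phiIter S' φ n s' s ∧ phiIter S' φ n t' t) := by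
  have hcast : ((n₂ - n₁ : ℕ) : ZMod k) = 0 := by
    have h5 : (n₁ : ZMod k) = (n₂ : ZMod k) := add_left_cancel (h1.symm.trans h3)
    rw [Nat.cast_sub hle, ← h5, sub_self]
  have hdvd : k ∣ n₂ - n₁ := (ZMod.natCast_eq_zero_iff _ _).1 hcast
  rcases eq_or_lt_of_le hle with rfl | hlt
  · exact ⟨n₁, Or.inl ⟨h1, h2, h4⟩⟩
  · by_cases hc : OnCycle S' φ t
    · have hkfix : φ^[k] t = t := onCycle_dvd hE hcyc hc
      have hfix : φ^[n₂ - n₁] t = t := iterate_fixed_dvd hkfix hdvd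
      have ht' : φ^[n₁] t = t' := by
        rw [← phiIter_eq h4, show n₂ = n₁ + (n₂ - n₁) by omega,
          Function.iterate_add_apply, hfix]
      exact ⟨n₁, Or.inl ⟨h1, h2, ht' ▸ onCycle_phiIter hc n₁⟩⟩
    · exfalso
      have hb : 2 * n₂ < k := not_onCycle_bound hinj hE hpath hc (Or.inl h4)
      have hkle : k ≤ n₂ - n₁ := Nat.le_of_dvd (by omega) hdvd
      omega

theorem FB [Fintype S] (hinj : Set.InjOn φ S') {k : ℕ} (hk : 0 < k) {E : S → S → Prop}
    (hE : ∀ a b, E a b ↔ a ∈ S' ∧ φ a = b)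
    (hcyc : ∀ (n : ℕ) (f : ZMod (n + 1) → S), Function.Injective f →
      (∀ i, E (f i) (f (i + 1))) → (n + 1) ∣ k)
    (hpath : ∀ (n : ℕ) (f : Fin (n + 1) → S), Function.Injective f →
      (∀ i : Fin n, E (f i.castSucc) (f i.succ)) →
      (∀ x, ¬ E x (f 0)) → (∀ x, ¬ E (f (Fin.last n)) x) → 2 * n < k)
    {i j : ZMod k} {s s' t t' : S} {n₁ n₂ : ℕ}
    (h1 : j = i + (n₁ : ZMod k)) (h2 : phiIter S' φ n₁ s s')
    (h3 : i = j + (n₂ : ZMod k)) (h4 : phiIter S' φ n₂ t' t) :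
    ∃ n : ℕ, (j = i + (n : ZMod k) ∧ phiIter S' φ n s s' ∧ phiIter S' φ n t t') ∨
      (i = j + (n : ZMod k) ∧ phiIter S' φ n s' s ∧ phiIter S' φ n t' t) := by
  have hcast : ((n₁ + n₂ : ℕ) : ZMod k) = 0 := by
    have h5 : i + ((n₁ : ZMod k) + (n₂ : ZMod k)) = i + 0 := by
      rw [← add_assoc, ← h1, ← h3, add_zero]
    push_cast
    exact add_left_cancel h5
  have hdvd : k ∣ n₁ + n₂ := (ZMod.natCast_eq_zero_iff _ _).1 hcast
  rcases Nat.eq_zero_or_pos (n₁ + n₂) with h0 | hpos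
  · obtain ⟨rfl, rfl⟩ : n₁ = 0 ∧ n₂ = 0 := by omega
    refine ⟨0, Or.inl ⟨h1, h2, ?_⟩⟩
    have : t' = t := phiIter_eq h4
    exact this.symm
  · have hkle : k ≤ n₁ + n₂ := Nat.le_of_dvd hpos hdvd
    by_cases hc : OnCycle S' φ t'
    · have hct : OnCycle S' φ t := (phiIter_eq h4) ▸ onCycle_push hc n₂
      have hkfix : φ^[k] t' = t' := onCycle_dvd hE hcyc hc
      have hfix : φ^[n₁ + n₂] t' = t' := iterate_fixed_dvd hkfix hdvd
      have ht2 : φ^[n₁] t = t' := by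
        rw [← phiIter_eq h4, ← Function.iterate_add_apply]
        exact hfix
      exact ⟨n₁, Or.inl ⟨h1, h2, ht2 ▸ onCycle_phiIter hct n₁⟩⟩
    · by_cases hcs : OnCycle S' φ s'
      · have hcs2 : OnCycle S' φ s := onCycle_pull hinj hcs h2
        have hkfix : φ^[k] s = s := onCycle_dvd hE hcyc hcs2
        have hfix : φ^[n₂ + n₁] s = s :=
          iterate_fixed_dvd hkfix (by rwa [Nat.add_comm n₂ n₁])
        have hps' : φ^[n₂] s' = s := by
          rw [← phiIter_eq h2, ← Function.iterate_add_apply]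
          exact hfix
        exact ⟨n₂, Or.inr ⟨h3, hps' ▸ onCycle_phiIter hcs n₂, h4⟩⟩
      · exfalso
        have hb1 : 2 * n₂ < k := not_onCycle_bound hinj hE hpath hc (Or.inl h4)
        have hb2 : 2 * n₁ < k := not_onCycle_bound hinj hE hpath hcs (Or.inr h2)
        omega

end Aux

/-- Let S̄ be the quotient of ℤ/k × S by the equivalence relation generated by
(i,s) ∼ (i+1, φ(s)) for s ∈ S'.  If k is a multiple of the length of every cycle of Λ and
greater than twice the length of every (non-closed) path of Λ, and ψ_i(s) = ψ_j(s') and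
ψ_i(t) = ψ_j(t'), then there is n ≥ 0 with either s' = φⁿ(s), t' = φⁿ(t) and j = i + n, or
s = φⁿ(s'), t = φⁿ(t') and i = j + n. -/
theorem classes_related_by_iterates
    (S : Type*) [Fintype S] (S' S'' : Set S) (φ : S → S)
    (hmap : ∀ s ∈ S', φ s ∈ S'')
    (hinj : Set.InjOn φ S')
    (hsurj : S'' ⊆ φ '' S')
    (k : ℕ) (hk : 0 < k)
    (E : S → S → Prop)
    (hE : ∀ a b, E a b ↔ a ∈ S' ∧ φ a = b)
    -- k is a multiple of the length of every directed cycle of Λ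
    (hcyc : ∀ (n : ℕ) (f : ZMod (n + 1) → S), Function.Injective f →
      (∀ i, E (f i) (f (i + 1))) → (n + 1) ∣ k)
    -- k exceeds twice the length of every non-closed directed path component of Λ
    (hpath : ∀ (n : ℕ) (f : Fin (n + 1) → S), Function.Injective f →
      (∀ i : Fin n, E (f i.castSucc) (f i.succ)) →
      (∀ x, ¬ E x (f 0)) → (∀ x, ¬ E (f (Fin.last n)) x) → 2 * n < k)
    -- the relation generating the quotient S̄ of ℤ/k × S
    (r : ZMod k × S → ZMod k × S → Prop)
    (hr : ∀ x y, r x y ↔ x.2 ∈ S' ∧ y = (x.1 + 1, φ x.2))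
    (i j : ZMod k) (s s' t t' : S)
    -- ψ_i(s) = ψ_j(s') and ψ_i(t) = ψ_j(t')
    (hx : Relation.EqvGen r (i, s) (j, s'))
    (hy : Relation.EqvGen r (i, t) (j, t')) :
    ∃ n : ℕ, (j = i + (n : ZMod k) ∧ phiIter S' φ n s s' ∧ phiIter S' φ n t t') ∨
      (i = j + (n : ZMod k) ∧ phiIter S' φ n s' s ∧ phiIter S' φ n t' t) := by
  obtain ⟨n₁, h₁⟩ := eqvGen_rel hinj hr hx
  obtain ⟨n₂, h₂⟩ := eqvGen_rel hinj hr hy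
  rcases h₁ with ⟨ha, hb⟩ | ⟨ha, hb⟩ <;> rcases h₂ with ⟨hc, hd⟩ | ⟨hc, hd⟩
  · rcases le_total n₁ n₂ with hle | hle
    · exact FF hinj hk hE hcyc hpath hle ha hb hc hd
    · obtain ⟨n, hn⟩ := FF hinj hk hE hcyc hpath hle hc hd ha hb
      exact ⟨n, by tauto⟩
  · exact FB hinj hk hE hcyc hpath ha hb hc hd
  · obtain ⟨n, hn⟩ := FB hinj hk hE hcyc hpath hc hd ha hb
    exact ⟨n, by tauto⟩
  · rcases le_total n₁ n₂ with hle | hle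
    · obtain ⟨n, hn⟩ := FF hinj hk hE hcyc hpath hle ha hb hc hd
      exact ⟨n, hn.symm⟩
    · obtain ⟨n, hn⟩ := FF hinj hk hE hcyc hpath hle hc hd ha hb
      exact ⟨n, by tauto⟩
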